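/- arXiv:2504.05453 — 5 statements merged into one kernel-verified Lean document; each statement's English description precedes it below -/
import Mathlib

section
/- Let N, m be positive integers, M a real N×N positive-definite diagonal matrix, Q a real m×N matrix, and D = QᵀQ. Let E > 0 and let u : ℝ → ℝ^N be twice differentiable with M·u''(t) = −D·u(t) for all t. Define ψ : ℝ → ℂ^(N+m) by ψ(t) = (1/√(2E))·(M^{1/2}u'(t), i·Q u(t)) (first N complex components M^{1/2}u'(t), last m components i·Qu(t)), and define the Hermitian matrix H = −[[0, M^{−1/2}Qᵀ],[Q M^{−1/2}, 0]] (an (N+m)×(N+m) block matrix). Then ψ is differentiable and ψ'(t) = −i·H·ψ(t) for all t. -/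
/-!
Differentiating `ψ` componentwise gives `c (M^{1/2} u'', i Q u')` with `c = 1/√(2E)`.
On the other side, `-iH` sends `c (a, i b)` to `c (-M^{-1/2} Qᵀ b, i Q M^{-1/2} a)`. For `b = Q u`
the equation of motion turns `M^{-1/2} QᵀQ u` into `-M^{-1/2} M u'' = -M^{1/2} u''`, and for
`a = M^{1/2} u'` the factors `M^{∓1/2}` cancel.
-/

open Matrix

theorem fromBlocks_zero_zero_mulVec_sumElim {ι κ α : Type*} [Fintype ι] [Fintype κ]
    [NonUnitalNonAssocSemiring α] (B : Matrix ι κ α) (C : Matrix κ ι α) (x : ι → α) (y : κ → α) :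
    fromBlocks 0 B C 0 *ᵥ Sum.elim x y = Sum.elim (B *ᵥ y) (C *ᵥ x) := by
  simp [fromBlocks_mulVec, Function.comp_def]

theorem HasDerivAt.mulVec_apply {𝕜 ι κ : Type*} [NontriviallyNormedField 𝕜] [Fintype ι]
    (A : Matrix κ ι 𝕜) {v : 𝕜 → ι → 𝕜} {v' : ι → 𝕜} {t : 𝕜}
    (hv : ∀ i, HasDerivAt (fun s => v s i) (v' i) t) (k : κ) :
    HasDerivAt (fun s => (A *ᵥ v s) k) ((A *ᵥ v') k) t := by
  simp only [mulVec, dotProduct]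
  exact HasDerivAt.fun_sum fun i _ => (hv i).const_mul (A k i)

theorem ofReal_mulVec_apply {ι κ : Type*} [Fintype ι] (A : Matrix κ ι ℝ) (v : ι → ℝ) (k : κ) :
    (A.map (fun x : ℝ => (x : ℂ)) *ᵥ fun i => (v i : ℂ)) k = ((A *ᵥ v) k : ℂ) :=
  (RingHom.map_mulVec Complex.ofRealHom A v k).symm

theorem neg_I_smul_neg_fromBlocks_mulVec {ι κ : Type*} [Fintype ι] [Fintype κ]
    (B : Matrix ι κ ℝ) (C : Matrix κ ι ℝ) (a : ι → ℝ) (b : κ → ℝ) (c : ℂ) :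
    (-Complex.I) •
        (-(fromBlocks 0 (B.map (fun x : ℝ => (x : ℂ))) (C.map (fun x : ℝ => (x : ℂ))) 0) *ᵥ
          fun x => c * Sum.elim (fun i => (a i : ℂ)) (fun k => Complex.I * (b k : ℂ)) x) =
      fun x => c * Sum.elim (fun i => ((-(B *ᵥ b)) i : ℂ))
        (fun k => Complex.I * ((C *ᵥ a) k : ℂ)) x := by
  have hsplit : (fun x => c * Sum.elim (fun i => (a i : ℂ)) (fun k => Complex.I * (b k : ℂ)) x) =
      c • Sum.elim (fun i => (a i : ℂ)) (Complex.I • fun k => (b k : ℂ)) := by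
    ext (i | k) <;> simp
  rw [hsplit, neg_mulVec, mulVec_smul, fromBlocks_zero_zero_mulVec_sumElim, mulVec_smul]
  ext (i | k)
  · simp only [Pi.smul_apply, Pi.neg_apply, Sum.elim_inl, ofReal_mulVec_apply, smul_eq_mul,
      mul_neg, neg_mul, neg_neg, Complex.ofReal_neg]
    linear_combination (c * ((B *ᵥ b) i : ℂ)) * Complex.I_mul_I
  · simp only [Pi.smul_apply, Pi.neg_apply, Sum.elim_inr, ofReal_mulVec_apply, smul_eq_mul,
      mul_neg, neg_mul, neg_neg]
    ring

theorem diagonal_inv_sqrt_mul_diagonal {ι : Type*} [Fintype ι] [DecidableEq ι] (d : ι → ℝ) :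
    diagonal (fun i => (√(d i))⁻¹) * diagonal d = diagonal fun i => √(d i) := by
  simp [diagonal_mul_diagonal, inv_mul_eq_div, Real.div_sqrt]

theorem diagonal_inv_sqrt_mul_diagonal_sqrt {ι : Type*} [Fintype ι] [DecidableEq ι] {d : ι → ℝ}
    (hd : ∀ i, 0 < d i) : diagonal (fun i => (√(d i))⁻¹) * diagonal (fun i => √(d i)) = 1 := by
  rw [diagonal_mul_diagonal, ← diagonal_one]
  exact congrArg diagonal (funext fun i => inv_mul_cancel₀ (Real.sqrt_pos.2 (hd i)).ne')

theorem diagonal_inv_sqrt_mul_transpose_mulVec_mulVec {ι κ : Type*} [Fintype ι] [Fintype κ]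
    [DecidableEq ι] (Q : Matrix κ ι ℝ) {d v w : ι → ℝ}
    (hode : diagonal d *ᵥ w = -((Qᵀ * Q) *ᵥ v)) :
    (diagonal (fun i => (√(d i))⁻¹) * Qᵀ) *ᵥ (Q *ᵥ v) = -(diagonal (fun i => √(d i)) *ᵥ w) := by
  have hforce : (Qᵀ * Q) *ᵥ v = -(diagonal d *ᵥ w) := by rw [hode, neg_neg]
  rw [mulVec_mulVec, Matrix.mul_assoc, ← mulVec_mulVec, hforce, mulVec_neg, mulVec_mulVec,
    diagonal_inv_sqrt_mul_diagonal]

theorem mul_diagonal_inv_sqrt_mulVec_diagonal_sqrt_mulVec {ι κ : Type*} [Fintype ι]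
    [DecidableEq ι] (Q : Matrix κ ι ℝ) {d : ι → ℝ} (hd : ∀ i, 0 < d i) (w : ι → ℝ) :
    (Q * diagonal (fun i => (√(d i))⁻¹)) *ᵥ (diagonal (fun i => √(d i)) *ᵥ w) = Q *ᵥ w := by
  rw [mulVec_mulVec, Matrix.mul_assoc, diagonal_inv_sqrt_mul_diagonal_sqrt hd, Matrix.mul_one]

theorem lattice_to_schrodinger_general
    (N m : ℕ)
    (Mdiag : Fin N → ℝ) (hM : ∀ i, 0 < Mdiag i)
    (Q : Matrix (Fin m) (Fin N) ℝ)
    (E : ℝ)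
    (u u' u'' : ℝ → Fin N → ℝ)
    (hu : ∀ t i, HasDerivAt (fun s => u s i) (u' t i) t)
    (hu' : ∀ t i, HasDerivAt (fun s => u' s i) (u'' t i) t)
    (hode : ∀ t, (Matrix.diagonal Mdiag) *ᵥ (u'' t) = -((Qᵀ * Q) *ᵥ (u t)))
    (ψ : ℝ → (Fin N ⊕ Fin m) → ℂ)
    (hψ : ∀ t, ψ t = fun x =>
      (1 / (Real.sqrt (2 * E) : ℂ)) * (Sum.elim
        (fun i : Fin N => ((Real.sqrt (Mdiag i) * u' t i : ℝ) : ℂ))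
        (fun j : Fin m => Complex.I * (((Q *ᵥ (u t)) j : ℝ) : ℂ)) x))
    (H : Matrix (Fin N ⊕ Fin m) (Fin N ⊕ Fin m) ℂ)
    (hH : H = -(Matrix.fromBlocks 0
      (((Matrix.diagonal fun i => (Real.sqrt (Mdiag i))⁻¹) * Qᵀ).map (fun x : ℝ => (x : ℂ)))
      ((Q * (Matrix.diagonal fun i => (Real.sqrt (Mdiag i))⁻¹)).map (fun x : ℝ => (x : ℂ)))
      0)) :
    ∀ t x, HasDerivAt (fun s => ψ s x) ((((-Complex.I) • (H *ᵥ ψ t))) x) t := by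
  intro t x
  have hψ_diag : ∀ s, ψ s = fun x => (1 / (√(2 * E) : ℂ)) * Sum.elim
      (fun i => ((diagonal (fun i => √(Mdiag i)) *ᵥ u' s) i : ℂ))
      (fun j => Complex.I * ((Q *ᵥ u s) j : ℂ)) x := by
    simpa only [mulVec_diagonal] using hψ
  rw [hH, hψ_diag, neg_I_smul_neg_fromBlocks_mulVec,
    diagonal_inv_sqrt_mul_transpose_mulVec_mulVec Q (hode t),
    mul_diagonal_inv_sqrt_mulVec_diagonal_sqrt_mulVec Q hM, neg_neg]
  simp only [hψ, mulVec_diagonal]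
  rcases x with i | j
  · exact (((hu' t i).const_mul _).ofReal_comp).const_mul _
  · exact (((HasDerivAt.mulVec_apply Q (hu t) j).ofReal_comp).const_mul _).const_mul _

/-- Lemma 1 (forward direction): if `M u'' = -D u` with `D = QᵀQ`, then the
encoded state `ψ(t) = (1/√(2E)) (M^{1/2} u'(t), i Q u(t))` satisfies `ψ' = -i H ψ` with
`H = -[[0, M^{-1/2}Qᵀ],[Q M^{-1/2}, 0]]`. -/
theorem lattice_to_schrodinger
    (N m : ℕ) (hN : 0 < N) (hm : 0 < m)
    (Mdiag : Fin N → ℝ) (hM : ∀ i, 0 < Mdiag i)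
    (Q : Matrix (Fin m) (Fin N) ℝ)
    (E : ℝ) (hE : 0 < E)
    (u u' u'' : ℝ → Fin N → ℝ)
    (hu : ∀ t i, HasDerivAt (fun s => u s i) (u' t i) t)
    (hu' : ∀ t i, HasDerivAt (fun s => u' s i) (u'' t i) t)
    (hode : ∀ t, (Matrix.diagonal Mdiag) *ᵥ (u'' t) = -((Qᵀ * Q) *ᵥ (u t)))
    (ψ : ℝ → (Fin N ⊕ Fin m) → ℂ)
    (hψ : ∀ t, ψ t = fun x =>
      (1 / (Real.sqrt (2 * E) : ℂ)) * (Sum.elim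
        (fun i : Fin N => ((Real.sqrt (Mdiag i) * u' t i : ℝ) : ℂ))
        (fun j : Fin m => Complex.I * (((Q *ᵥ (u t)) j : ℝ) : ℂ)) x))
    (H : Matrix (Fin N ⊕ Fin m) (Fin N ⊕ Fin m) ℂ)
    (hH : H = -(Matrix.fromBlocks 0
      (((Matrix.diagonal fun i => (Real.sqrt (Mdiag i))⁻¹) * Qᵀ).map (fun x : ℝ => (x : ℂ)))
      ((Q * (Matrix.diagonal fun i => (Real.sqrt (Mdiag i))⁻¹)).map (fun x : ℝ => (x : ℂ)))
      0)) :
    ∀ t x, HasDerivAt (fun s => ψ s x) ((((-Complex.I) • (H *ᵥ ψ t))) x) t :=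
  lattice_to_schrodinger_general N m Mdiag hM Q E u u' u'' hu hu' hode ψ hψ H hH
end

section
/- Let N, m be positive integers, M a real N×N positive-definite diagonal matrix, Q a real m×N matrix, D = QᵀQ, E > 0, and H = −[[0, M^{−1/2}Qᵀ],[Q M^{−1/2}, 0]]. Suppose ψ : ℝ → ℂ^(N+m) is differentiable, satisfies ψ'(t) = −i·H·ψ(t) for all t, and ψ(0) = (1/√(2E))·(M^{1/2}v₀, i·Q u₀) for some u₀, v₀ ∈ ℝ^N. Then the unique solution u : ℝ → ℝ^N of M·u''(t) = −D·u(t) with u(0) = u₀ and u'(0) = v₀ satisfies ψ(t) = (1/√(2E))·(M^{1/2}u'(t), i·Q u(t)) for all t. -/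
open Matrix Complex

/-!
Both `ψ` and `t ↦ (1/√(2E)) (M^{1/2} u'(t), i Q u(t))` solve the linear equation `φ' = -i H φ`
with the same value at `t = 0`. For the second, the lower block of `-i H` sends the encoded state
to `i Q u'`, while the upper block gives `-M^{-1/2} Qᵀ Q u = M^{1/2} u''` by the lattice equation.
A linear vector field is globally Lipschitz, so the two solutions coincide.
-/

theorem linear_ODE_solution_unique {𝕜 E : Type*} [NontriviallyNormedField 𝕜]
    [NormedAddCommGroup E] [NormedSpace 𝕜 E] [NormedSpace ℝ E] (L : E →L[𝕜] E)
    {f g : ℝ → E} {t₀ : ℝ} (hf : ∀ t, HasDerivAt f (L (f t)) t)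
    (hg : ∀ t, HasDerivAt g (L (g t)) t) (h : f t₀ = g t₀) : f = g :=
  ODE_solution_unique_univ (v := fun _ => L) (s := fun _ => Set.univ)
    (fun _ => L.lipschitz.lipschitzOnWith) (fun t => ⟨hf t, trivial⟩)
    (fun t => ⟨hg t, trivial⟩) h

section

variable {ι κ : Type*} [Fintype ι]

theorem map_ofReal_mulVec (A : Matrix κ ι ℝ) (x : ι → ℝ) :
    A.map (fun x : ℝ => (x : ℂ)) *ᵥ (fun i => (x i : ℂ)) = fun j => ((A *ᵥ x) j : ℂ) :=
  funext fun j => (RingHom.map_mulVec ofRealHom A x j).symm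

theorem map_ofReal_mulVec_const_mul (A : Matrix κ ι ℝ) (x : ι → ℝ) (c : ℂ) :
    A.map (fun x : ℝ => (x : ℂ)) *ᵥ (fun i => c * (x i : ℂ)) = fun j => c * ((A *ᵥ x) j : ℂ) := by
  have h := mulVec_smul (A.map (fun x : ℝ => (x : ℂ))) c fun i => (x i : ℂ)
  rw [map_ofReal_mulVec] at h
  exact h

noncomputable def latticeState (M : ι → ℝ) (Q : Matrix κ ι ℝ) (u v : ι → ℝ) : ι ⊕ κ → ℂ :=
  Sum.elim (fun i => ((√(M i) * v i : ℝ) : ℂ)) (fun j => I * ((Q *ᵥ u) j : ℂ))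

theorem hasDerivAt_latticeState (M : ι → ℝ) (Q : Matrix κ ι ℝ) {u v : ℝ → ι → ℝ}
    {u' v' : ι → ℝ} {t : ℝ} (hu : ∀ i, HasDerivAt (fun s => u s i) (u' i) t)
    (hv : ∀ i, HasDerivAt (fun s => v s i) (v' i) t) :
    HasDerivAt (fun s => latticeState M Q (u s) (v s)) (latticeState M Q u' v') t := by
  rw [hasDerivAt_pi]
  rintro (i | j)
  · exact ((hv i).const_mul (√(M i))).ofReal_comp
  · have hQu : HasDerivAt (fun s => (Q *ᵥ u s) j) ((Q *ᵥ u') j) t :=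
      HasDerivAt.fun_sum fun i _ => (hu i).const_mul (Q j i)
    exact hQu.ofReal_comp.const_mul I

variable [DecidableEq ι]

noncomputable def latticeHamiltonian (M : ι → ℝ) (Q : Matrix κ ι ℝ) :
    Matrix (ι ⊕ κ) (ι ⊕ κ) ℂ :=
  -(fromBlocks 0 (((diagonal fun i => (√(M i))⁻¹) * Qᵀ).map (fun x : ℝ => (x : ℂ)))
      ((Q * (diagonal fun i => (√(M i))⁻¹)).map (fun x : ℝ => (x : ℂ))) 0)

theorem mul_diagonal_inv_sqrt_mulVec {M : ι → ℝ} (hM : ∀ i, 0 < M i) (Q : Matrix κ ι ℝ)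
    (v : ι → ℝ) :
    (Q * diagonal fun i => (√(M i))⁻¹) *ᵥ (fun i => √(M i) * v i) = Q *ᵥ v := by
  rw [← mulVec_mulVec]
  congr 1
  ext i
  rw [mulVec_diagonal, inv_mul_cancel_left₀ (Real.sqrt_pos.2 (hM i)).ne']

variable [Fintype κ]

theorem diagonal_inv_sqrt_mul_transpose_mulVec {M : ι → ℝ} (hM : ∀ i, 0 < M i)
    (Q : Matrix κ ι ℝ) {u w : ι → ℝ} (hw : diagonal M *ᵥ w = -((Qᵀ * Q) *ᵥ u)) :
    ((diagonal fun i => (√(M i))⁻¹) * Qᵀ) *ᵥ (Q *ᵥ u) = fun i => -(√(M i) * w i) := by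
  ext i
  rw [← mulVec_mulVec, mulVec_mulVec u, ← neg_neg ((Qᵀ * Q) *ᵥ u), ← hw, mulVec_neg,
    Pi.neg_apply, mulVec_diagonal, mulVec_diagonal]
  have hsq := Real.mul_self_sqrt (hM i).le
  have hne := (Real.sqrt_pos.2 (hM i)).ne'
  field_simp
  linear_combination w i * hsq

theorem neg_I_smul_latticeHamiltonian_mulVec_latticeState {M : ι → ℝ} (hM : ∀ i, 0 < M i)
    (Q : Matrix κ ι ℝ) {u v w : ι → ℝ} (hw : diagonal M *ᵥ w = -((Qᵀ * Q) *ᵥ u)) :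
    (-I) • (latticeHamiltonian M Q *ᵥ latticeState M Q u v) = latticeState M Q v w := by
  ext (i | j) <;>
    simp only [latticeHamiltonian, latticeState, neg_mulVec, fromBlocks_mulVec, Pi.smul_apply,
      Pi.neg_apply, Sum.elim_inl, Sum.elim_inr, Sum.elim_comp_inl,
      Sum.elim_comp_inr, zero_mulVec, zero_add, add_zero, smul_eq_mul, neg_mul_neg,
      map_ofReal_mulVec, map_ofReal_mulVec_const_mul]
  · rw [diagonal_inv_sqrt_mul_transpose_mulVec hM Q hw, ofReal_neg]
    linear_combination (-((√(M i) * w i : ℝ) : ℂ)) * I_mul_I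
  · rw [mul_diagonal_inv_sqrt_mulVec hM]

end

theorem schrodinger_to_lattice_general
    (N m : ℕ)
    (Mdiag : Fin N → ℝ) (hM : ∀ i, 0 < Mdiag i)
    (Q : Matrix (Fin m) (Fin N) ℝ)
    (E : ℝ)
    (H : Matrix (Fin N ⊕ Fin m) (Fin N ⊕ Fin m) ℂ)
    (hH : H = -(Matrix.fromBlocks 0
      (((Matrix.diagonal fun i => (Real.sqrt (Mdiag i))⁻¹) * Qᵀ).map (fun x : ℝ => (x : ℂ)))
      ((Q * (Matrix.diagonal fun i => (Real.sqrt (Mdiag i))⁻¹)).map (fun x : ℝ => (x : ℂ)))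
      0))
    (ψ : ℝ → (Fin N ⊕ Fin m) → ℂ)
    (hψdiff : ∀ t x, HasDerivAt (fun s => ψ s x) ((((-Complex.I) • (H *ᵥ ψ t))) x) t)
    (u₀ v₀ : Fin N → ℝ)
    (hψ0 : ψ 0 = fun x =>
      (1 / (Real.sqrt (2 * E) : ℂ)) * (Sum.elim
        (fun i : Fin N => ((Real.sqrt (Mdiag i) * v₀ i : ℝ) : ℂ))
        (fun j : Fin m => Complex.I * (((Q *ᵥ u₀) j : ℝ) : ℂ)) x))
    (u u' u'' : ℝ → Fin N → ℝ)
    (hu : ∀ t i, HasDerivAt (fun s => u s i) (u' t i) t)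
    (hu' : ∀ t i, HasDerivAt (fun s => u' s i) (u'' t i) t)
    (hode : ∀ t, (Matrix.diagonal Mdiag) *ᵥ (u'' t) = -((Qᵀ * Q) *ᵥ (u t)))
    (hic0 : u 0 = u₀) (hic1 : u' 0 = v₀) :
    ∀ t, ψ t = fun x =>
      (1 / (Real.sqrt (2 * E) : ℂ)) * (Sum.elim
        (fun i : Fin N => ((Real.sqrt (Mdiag i) * u' t i : ℝ) : ℂ))
        (fun j : Fin m => Complex.I * (((Q *ᵥ (u t)) j : ℝ) : ℂ)) x) := by
  have hHL : H = latticeHamiltonian Mdiag Q := hH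
  set c : ℂ := 1 / (Real.sqrt (2 * E) : ℂ)
  let L : (Fin N ⊕ Fin m → ℂ) →L[ℂ] (Fin N ⊕ Fin m → ℂ) :=
    (-I) • LinearMap.toContinuousLinearMap (mulVecLin H)
  have hψ (t : ℝ) : HasDerivAt ψ (L (ψ t)) t := hasDerivAt_pi.2 (hψdiff t)
  have hφ (t : ℝ) : HasDerivAt (fun s => c • latticeState Mdiag Q (u s) (u' s))
      (L (c • latticeState Mdiag Q (u t) (u' t))) t := by
    have h := (hasDerivAt_latticeState Mdiag Q (hu t) (hu' t)).const_smul c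
    rwa [← neg_I_smul_latticeHamiltonian_mulVec_latticeState hM Q (hode t), ← hHL, smul_comm,
      ← mulVec_smul] at h
  have h0 : ψ 0 = c • latticeState Mdiag Q (u 0) (u' 0) := by rw [hψ0, hic0, hic1]; rfl
  exact fun t => congrFun (linear_ODE_solution_unique L hψ hφ h0) t

/-- Lemma 1 (converse direction): if `ψ` solves the Schrödinger equation
`ψ' = -iHψ` with `ψ(0)` of the encoded form for data `(u₀, v₀)`, then the (unique) solution
`u` of `M u'' = -D u`, `u(0)=u₀`, `u'(0)=v₀` satisfies
`ψ(t) = (1/√(2E)) (M^{1/2} u'(t), i Q u(t))` for all `t`. -/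
theorem schrodinger_to_lattice
    (N m : ℕ) (hN : 0 < N) (hm : 0 < m)
    (Mdiag : Fin N → ℝ) (hM : ∀ i, 0 < Mdiag i)
    (Q : Matrix (Fin m) (Fin N) ℝ)
    (E : ℝ) (hE : 0 < E)
    (H : Matrix (Fin N ⊕ Fin m) (Fin N ⊕ Fin m) ℂ)
    (hH : H = -(Matrix.fromBlocks 0
      (((Matrix.diagonal fun i => (Real.sqrt (Mdiag i))⁻¹) * Qᵀ).map (fun x : ℝ => (x : ℂ)))
      ((Q * (Matrix.diagonal fun i => (Real.sqrt (Mdiag i))⁻¹)).map (fun x : ℝ => (x : ℂ)))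
      0))
    (ψ : ℝ → (Fin N ⊕ Fin m) → ℂ)
    (hψdiff : ∀ t x, HasDerivAt (fun s => ψ s x) ((((-Complex.I) • (H *ᵥ ψ t))) x) t)
    (u₀ v₀ : Fin N → ℝ)
    (hψ0 : ψ 0 = fun x =>
      (1 / (Real.sqrt (2 * E) : ℂ)) * (Sum.elim
        (fun i : Fin N => ((Real.sqrt (Mdiag i) * v₀ i : ℝ) : ℂ))
        (fun j : Fin m => Complex.I * (((Q *ᵥ u₀) j : ℝ) : ℂ)) x))
    (u u' u'' : ℝ → Fin N → ℝ)
    (hu : ∀ t i, HasDerivAt (fun s => u s i) (u' t i) t)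
    (hu' : ∀ t i, HasDerivAt (fun s => u' s i) (u'' t i) t)
    (hode : ∀ t, (Matrix.diagonal Mdiag) *ᵥ (u'' t) = -((Qᵀ * Q) *ᵥ (u t)))
    (hic0 : u 0 = u₀) (hic1 : u' 0 = v₀) :
    ∀ t, ψ t = fun x =>
      (1 / (Real.sqrt (2 * E) : ℂ)) * (Sum.elim
        (fun i : Fin N => ((Real.sqrt (Mdiag i) * u' t i : ℝ) : ℂ))
        (fun j : Fin m => Complex.I * (((Q *ᵥ (u t)) j : ℝ) : ℂ)) x) :=
  schrodinger_to_lattice_general N m Mdiag hM Q E H hH ψ hψdiff u₀ v₀ hψ0 u u' u'' hu hu' hode hic0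
    hic1
end

section
/- Let m, d, q, r, L be positive integers and p ≤ q a positive integer. Let Q^{(s)}_{j} ∈ ℂ^{m×m} for s ∈ {1,…,r} and j ∈ {0,…,q}^d, extended by zero outside {0,…,q}^d. For ℓ ∈ ℤ^d define D_ℓ = Σ_{s=1}^{r} Σ_{j∈ℤ^d} (Q^{(s)}_{j+ℓ})† Q^{(s)}_{j} (a finite sum), and assume D_ℓ = 0 whenever ‖ℓ‖_∞ > p. Let D be the block matrix indexed by pairs of multi-indices j, k ∈ {1,…,L}^d with (j,k) block D_{k−j}, and let Q be the block matrix with block-rows indexed by pairs (ℓ, s) with ℓ ∈ {1,…,L+q}^d and s ∈ {1,…,r}, block-columns indexed by k ∈ {1,…,L}^d, whose ((ℓ,s), k) block equals Q^{(s)}_{ℓ−k} if 0 ≤ (ℓ−k)_i ≤ q for all i ∈ {1,…,d}, and zero otherwise. Then Q†Q = D. -/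
open Matrix

/-- paper's Theorem 2: multivariate block-Toeplitz construction. With
sum-of-squares coefficients `Q^{(s)}_j` supported in the box `{0,…,q}^d`, force constants
`D_ℓ = ∑_s ∑_j (Q^{(s)}_{j+ℓ})ᴴ Q^{(s)}_j` vanishing for `‖ℓ‖_∞ > p`, the block matrix `Q`
with `((ℓ,s),k)` block `Q^{(s)}_{ℓ-k}` satisfies `QᴴQ = D`, where `D` is the multilevel
block-Toeplitz matrix with `(j,k)` block `D_{k-j}`. -/
theorem block_toeplitz_factorization_multidim
    (m d q r L p : ℕ) (hm : 0 < m) (hd : 0 < d) (hq : 0 < q) (hr : 0 < r)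
    (hL : 0 < L) (hp : 0 < p) (hpq : p ≤ q)
    (Q : Fin r → (Fin d → ℤ) → Matrix (Fin m) (Fin m) ℂ)
    (hQsupp : ∀ s : Fin r, ∀ j : Fin d → ℤ,
      (∃ i, j i < 0 ∨ (q : ℤ) < j i) → Q s j = 0)
    (D : (Fin d → ℤ) → Matrix (Fin m) (Fin m) ℂ)
    (hD : ∀ ℓ : Fin d → ℤ,
      D ℓ = ∑ s : Fin r,
        ∑ j ∈ Fintype.piFinset (fun _ : Fin d => Finset.Icc (0 : ℤ) (q : ℤ)),
          (Q s (j + ℓ))ᴴ * Q s j)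
    (hDsupp : ∀ ℓ : Fin d → ℤ, (∃ i, (p : ℤ) < |ℓ i|) → D ℓ = 0)
    (Qbig : Matrix (((Fin d → Fin (L + q)) × Fin r) × Fin m)
      ((Fin d → Fin L) × Fin m) ℂ)
    (hQbig : ∀ rr : ((Fin d → Fin (L + q)) × Fin r) × Fin m,
      ∀ cc : (Fin d → Fin L) × Fin m,
      Qbig rr cc = Q rr.1.2 (fun i => ((rr.1.1 i : ℤ) - (cc.1 i : ℤ))) rr.2 cc.2)
    (Dbig : Matrix ((Fin d → Fin L) × Fin m) ((Fin d → Fin L) × Fin m) ℂ)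
    (hDbig : ∀ jr kc : (Fin d → Fin L) × Fin m,
      Dbig jr kc = D (fun i => ((kc.1 i : ℤ) - (jr.1 i : ℤ))) jr.2 kc.2) :
    Qbigᴴ * Qbig = Dbig := by
  classical
  ext jr kc
  obtain ⟨j, b⟩ := jr
  obtain ⟨k, c⟩ := kc
  rw [Matrix.mul_apply, hDbig, hD]
  simp only [Matrix.sum_apply, Matrix.mul_apply, Matrix.conjTranspose_apply, hQbig,
    Pi.add_apply]
  rw [Fintype.sum_prod_type, Fintype.sum_prod_type]
  rw [Finset.sum_comm]
  refine Finset.sum_congr rfl fun s _ => ?_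
  have hzero : ∀ ℓ : Fin d → Fin (L + q),
      ℓ ∉ (Finset.univ.filter fun ℓ : Fin d → Fin (L + q) =>
        ∀ i, (k i : ℤ) ≤ (ℓ i : ℤ) ∧ (ℓ i : ℤ) ≤ (k i : ℤ) + q) →
      ∑ a : Fin m, star (Q s (fun i => ((ℓ i : ℤ) - (j i : ℤ))) a b) *
        Q s (fun i => ((ℓ i : ℤ) - (k i : ℤ))) a c = 0 := by
    intro ℓ hℓ
    simp only [Finset.mem_filter, Finset.mem_univ, true_and, not_forall] at hℓ
    obtain ⟨i, hi⟩ := hℓ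
    have : Q s (fun i => ((ℓ i : ℤ) - (k i : ℤ))) = 0 := by
      apply hQsupp
      exact ⟨i, by omega⟩
    simp [this]
  rw [← Finset.sum_subset (Finset.filter_subset _ _) (fun x _ hx => hzero x hx)]
  refine Finset.sum_nbij' (fun ℓ => fun i => ((ℓ i : ℤ) - (k i : ℤ)))
    (fun t => fun i => (⟨(t i + (k i : ℤ)).toNat % (L + q),
      Nat.mod_lt _ (by omega)⟩ : Fin (L + q)))
    ?_ ?_ ?_ ?_ ?_
  · intro ℓ hℓ
    simp only [Finset.mem_filter, Finset.mem_univ, true_and] at hℓ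
    simp only [Fintype.mem_piFinset, Finset.mem_Icc]
    intro i
    have := hℓ i
    omega
  · intro t ht
    simp only [Fintype.mem_piFinset, Finset.mem_Icc] at ht
    simp only [Finset.mem_filter, Finset.mem_univ, true_and]
    intro i
    have h1 := ht i
    have h2 := (k i).isLt
    have h3 : (t i + (k i : ℤ)).toNat % (L + q) = (t i + (k i : ℤ)).toNat :=
      Nat.mod_eq_of_lt (by omega)
    simp only [h3]
    omega
  · intro ℓ hℓ
    simp only [Finset.mem_filter, Finset.mem_univ, true_and] at hℓ
    funext i
    have h1 := hℓ i
    have h2 := (ℓ i).isLt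
    apply Fin.ext
    have h3 : ((ℓ i : ℤ) - (k i : ℤ) + (k i : ℤ)).toNat % (L + q)
        = ((ℓ i : ℤ) - (k i : ℤ) + (k i : ℤ)).toNat := Nat.mod_eq_of_lt (by omega)
    simp only [h3]
    omega
  · intro t ht
    simp only [Fintype.mem_piFinset, Finset.mem_Icc] at ht
    funext i
    have h1 := ht i
    have h2 := (k i).isLt
    have h3 : (t i + (k i : ℤ)).toNat % (L + q) = (t i + (k i : ℤ)).toNat :=
      Nat.mod_eq_of_lt (by omega)
    simp only [h3]
    omega
  · intro ℓ _
    refine Finset.sum_congr rfl fun a _ => ?_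
    have harg : ((fun i => ((ℓ i : ℤ) - (k i : ℤ))) + fun i => ((k i : ℤ) - (j i : ℤ)))
        = fun i => ((ℓ i : ℤ) - (j i : ℤ)) := by
      funext i
      simp only [Pi.add_apply]
      ring
    rw [harg]
end

section
/- Let m, d, q, r be positive integers, S ⊂ ℤ^d a finite nonempty set, and define the padded set S̃ = ⋃_{k∈S} { k + α : α ∈ {0,…,q}^d }. Let Q^{(s)}_{j} ∈ ℂ^{m×m} for s ∈ {1,…,r} and j ∈ {0,…,q}^d, extended by zero outside {0,…,q}^d, and for ℓ ∈ ℤ^d define D_ℓ = Σ_{s=1}^{r} Σ_{j∈ℤ^d} (Q^{(s)}_{j+ℓ})† Q^{(s)}_{j}. Let D be the block matrix indexed by i, j ∈ S with (i,j) block D_{j−i}, and let Q be the block matrix with block-rows indexed by pairs (ℓ, s) ∈ S̃ × {1,…,r} and block-columns indexed by j ∈ S, with ((ℓ,s), j) block Q^{(s)}_{ℓ−j}. Then Q†Q = D. -/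
open Matrix
open scoped Pointwise

/-- extension of the paper's Theorem 2 to an arbitrary finite region
`S ⊂ ℤ^d`: with the padded set `S̃ = S + {0,…,q}^d`, the block matrix `Q` indexed by
`S̃ × {1,…,r}` (rows) and `S` (columns) with `((ℓ,s),j)` block `Q^{(s)}_{ℓ-j}` satisfies
`QᴴQ = D`, where `D` has `(i,j)` block `D_{j-i} = ∑_s ∑_α (Q^{(s)}_{α+j-i})ᴴ Q^{(s)}_α`. -/
theorem block_factorization_general_domain
    (m d q r : ℕ) (hm : 0 < m) (hd : 0 < d) (hq : 0 < q) (hr : 0 < r)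
    (S : Finset (Fin d → ℤ)) (hS : S.Nonempty)
    (Spad : Finset (Fin d → ℤ))
    (hSpad : Spad = S + Fintype.piFinset (fun _ : Fin d => Finset.Icc (0 : ℤ) (q : ℤ)))
    (Q : Fin r → (Fin d → ℤ) → Matrix (Fin m) (Fin m) ℂ)
    (hQsupp : ∀ s : Fin r, ∀ j : Fin d → ℤ,
      (∃ i, j i < 0 ∨ (q : ℤ) < j i) → Q s j = 0)
    (D : (Fin d → ℤ) → Matrix (Fin m) (Fin m) ℂ)
    (hD : ∀ ℓ : Fin d → ℤ,
      D ℓ = ∑ s : Fin r,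
        ∑ j ∈ Fintype.piFinset (fun _ : Fin d => Finset.Icc (0 : ℤ) (q : ℤ)),
          (Q s (j + ℓ))ᴴ * Q s j)
    (Qbig : Matrix ((↥Spad × Fin r) × Fin m) (↥S × Fin m) ℂ)
    (hQbig : ∀ rr : (↥Spad × Fin r) × Fin m, ∀ cc : ↥S × Fin m,
      Qbig rr cc = Q rr.1.2 ((rr.1.1 : Fin d → ℤ) - (cc.1 : Fin d → ℤ)) rr.2 cc.2)
    (Dbig : Matrix (↥S × Fin m) (↥S × Fin m) ℂ)
    (hDbig : ∀ ir jc : ↥S × Fin m,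
      Dbig ir jc = D ((jc.1 : Fin d → ℤ) - (ir.1 : Fin d → ℤ)) ir.2 jc.2) :
    Qbigᴴ * Qbig = Dbig := by
  ext ir jc
  obtain ⟨⟨iv, hi⟩, a⟩ := ir
  obtain ⟨⟨jv, hj⟩, b⟩ := jc
  simp only [Matrix.mul_apply, Matrix.conjTranspose_apply, hQbig, hDbig, hD,
    Matrix.sum_apply]
  rw [Fintype.sum_prod_type, Fintype.sum_prod_type, Finset.sum_comm]
  refine Finset.sum_congr rfl fun s _ => ?_
  have hsub : (Fintype.piFinset (fun _ : Fin d => Finset.Icc (0 : ℤ) (q : ℤ))).image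
      (fun α => α + jv) ⊆ Spad := by
    intro x hx
    simp only [Finset.mem_image] at hx
    obtain ⟨α, hα, rfl⟩ := hx
    rw [hSpad, Finset.mem_add]
    exact ⟨jv, hj, α, hα, by rw [add_comm]⟩
  have hsum : ∑ ℓ : ↥Spad, ∑ k : Fin m,
      star (Q s ((ℓ : Fin d → ℤ) - iv) k a) * Q s ((ℓ : Fin d → ℤ) - jv) k b
      = ∑ ℓ ∈ Spad, ∑ k : Fin m,
      star (Q s (ℓ - iv) k a) * Q s (ℓ - jv) k b :=
    Finset.sum_coe_sort Spad (fun ℓ => ∑ k : Fin m, star (Q s (ℓ - iv) k a) * Q s (ℓ - jv) k b)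
  rw [hsum, ← Finset.sum_subset hsub]
  · rw [Finset.sum_image (by intro x _ y _ h; simpa using congrArg (· - jv) h)]
    refine Finset.sum_congr rfl fun α hα => Finset.sum_congr rfl fun k _ => ?_
    congr 2
    · ring
    · ring
  · intro ℓ hℓ hℓ'
    have hz : Q s (ℓ - jv) = 0 := by
      apply hQsupp
      by_contra hc
      push_neg at hc
      apply hℓ'
      simp only [Finset.mem_image]
      refine ⟨ℓ - jv, ?_, by ring⟩
      simp only [Fintype.mem_piFinset, Finset.mem_Icc]
      intro i
      exact hc i
    refine Finset.sum_eq_zero fun k _ => ?_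
    rw [hz]
    simp
end

section
/- Let m, d, q, r be positive integers, Q^{(s)}_{j} ∈ ℂ^{m×m} for s ∈ {1,…,r} and j ∈ {0,…,q}^d, and suppose P(z) = Σ_{s=1}^{r} Q^{(s)}(z)† Q^{(s)}(z) for every z ∈ 𝕋^d, where Q^{(s)}(z) = Σ_j Q^{(s)}_j z^j. Let M be a real m×m positive-definite diagonal matrix and set ω_D² = sup_{z∈𝕋^d} ‖M^{−1/2} P(z) M^{−1/2}‖ (operator norm). Then Σ_{s=1}^{r} Σ_{j∈{0,…,q}^d} ‖Q^{(s)}_j M^{−1/2}‖_F² ≤ m·ω_D². -/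
/-!
Sample `P` on the grid `{ζᵏ : k ∈ {0,…,q}ᵈ}` with `ζ` a primitive `(q+1)`-th root of unity.
The monomials `zʲ`, `j ∈ {0,…,q}ᵈ`, are orthogonal over this grid, so the grid average of
`M^{-1/2} P(z) M^{-1/2} = ∑ₛ (Qₛ(z) M^{-1/2})† (Qₛ(z) M^{-1/2})` is
`∑ₛ ∑ⱼ (Qₛⱼ M^{-1/2})† (Qₛⱼ M^{-1/2})`, whose trace is the left-hand side. The real part of the
trace of an `m × m` matrix is at most `m` times its operator norm, which at each grid point is at
most `ω_D²`.
-/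

open Matrix Finset
-- Under this instance `‖A‖` is definitionally `‖toEuclideanCLM A‖`, the norm in `ω_D²`.
open scoped ComplexConjugate Matrix.Norms.L2Operator

section RootsOfUnity

variable {ζ : ℂ} {d n : ℕ}

theorem IsPrimitiveRoot.sum_conj_pow_mul_pow (hζ : IsPrimitiveRoot ζ n) (j j' : Fin n) :
    ∑ k : Fin n, conj ((ζ ^ (k : ℕ)) ^ (j : ℕ)) * (ζ ^ (k : ℕ)) ^ (j' : ℕ) =
      if j = j' then (n : ℂ) else 0 := by
  have hn : n ≠ 0 := (Fin.pos j).ne'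
  have hζ0 : ζ ≠ 0 := hζ.ne_zero hn
  set x := (ζ ^ (j : ℕ))⁻¹ * ζ ^ (j' : ℕ)
  have hterm : ∀ k : Fin n,
      conj ((ζ ^ (k : ℕ)) ^ (j : ℕ)) * (ζ ^ (k : ℕ)) ^ (j' : ℕ) = x ^ (k : ℕ) := by
    intro k
    rw [← Complex.inv_eq_conj (by simp [hζ.norm'_eq_one hn])]
    ring
  rw [Fintype.sum_congr _ _ hterm, Fin.sum_univ_eq_sum_range (x ^ ·)]
  split_ifs with h
  · simp [x, h, hζ0]
  · have hx : x ≠ 1 := fun hx ↦ h <| Fin.ext <|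
      hζ.pow_inj j.isLt j'.isLt (by rwa [inv_mul_eq_one₀ (by simp [hζ0])] at hx)
    have hxn : x ^ n = 1 := by
      rw [mul_pow, inv_pow, ← pow_mul, ← pow_mul, pow_mul', pow_mul' ζ, hζ.pow_eq_one]
      simp
    rw [geom_sum_eq hx, hxn, sub_self, zero_div]

theorem IsPrimitiveRoot.sum_grid_conj_monomial_mul_monomial (hζ : IsPrimitiveRoot ζ n)
    (j j' : Fin d → Fin n) :
    ∑ k : Fin d → Fin n,
        conj (∏ i, (ζ ^ (k i : ℕ)) ^ (j i : ℕ)) * ∏ i, (ζ ^ (k i : ℕ)) ^ (j' i : ℕ) =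
      if j = j' then (n : ℂ) ^ d else 0 := by
  simp_rw [map_prod, ← prod_mul_distrib]
  rw [← Fintype.prod_sum (fun i (t : Fin n) ↦
    conj ((ζ ^ (t : ℕ)) ^ (j i : ℕ)) * (ζ ^ (t : ℕ)) ^ (j' i : ℕ))]
  simp_rw [hζ.sum_conj_pow_mul_pow, prod_ite_zero, funext_iff]
  simp

end RootsOfUnity

noncomputable def matrixPoly {ι κ : Type*} {d n : ℕ} (C : (Fin d → Fin n) → Matrix ι κ ℂ)
    (z : Fin d → ℂ) : Matrix ι κ ℂ :=
  ∑ j, (∏ i, z i ^ (j i : ℕ)) • C j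

section MatrixPoly

variable {ι κ : Type*} [Fintype ι] {d n : ℕ}

theorem matrixPoly_mul {ν : Type*} (C : (Fin d → Fin n) → Matrix κ ι ℂ) (D : Matrix ι ν ℂ)
    (z : Fin d → ℂ) : matrixPoly (fun j ↦ C j * D) z = matrixPoly C z * D := by
  simp only [matrixPoly, Matrix.sum_mul, Matrix.smul_mul]

theorem conjTranspose_matrixPoly_mul_matrixPoly (C : (Fin d → Fin n) → Matrix ι κ ℂ)
    (z : Fin d → ℂ) :
    (matrixPoly C z)ᴴ * matrixPoly C z =
      ∑ j, ∑ j', (conj (∏ i, z i ^ (j i : ℕ)) * ∏ i, z i ^ (j' i : ℕ)) • ((C j)ᴴ * C j') := by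
  simp only [matrixPoly, conjTranspose_sum, conjTranspose_smul, Matrix.sum_mul, Matrix.mul_sum,
    Matrix.smul_mul, Matrix.mul_smul, smul_sum, smul_smul, starRingEnd_apply]
  exact sum_comm.trans (sum_congr rfl fun _ _ ↦ sum_congr rfl fun _ _ ↦ by rw [mul_comm])

theorem IsPrimitiveRoot.sum_grid_conjTranspose_matrixPoly_mul {ζ : ℂ} (hζ : IsPrimitiveRoot ζ n)
    (C : (Fin d → Fin n) → Matrix ι κ ℂ) :
    ∑ k : Fin d → Fin n,
        (matrixPoly C (fun i ↦ ζ ^ (k i : ℕ)))ᴴ * matrixPoly C (fun i ↦ ζ ^ (k i : ℕ)) =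
      ((n : ℂ) ^ d) • ∑ j, (C j)ᴴ * C j := by
  simp_rw [conjTranspose_matrixPoly_mul_matrixPoly]
  rw [sum_comm]
  refine (sum_congr rfl fun j _ ↦ ?_).trans smul_sum.symm
  rw [sum_comm]
  simp only [← sum_smul, hζ.sum_grid_conj_monomial_mul_monomial, ite_smul, zero_smul,
    sum_ite_eq, mem_univ, if_true]

variable [Fintype κ]

theorem Matrix.re_trace_conjTranspose_mul_self (A : Matrix κ ι ℂ) :
    (trace (Aᴴ * A)).re = ∑ a, ∑ b, ‖A a b‖ ^ 2 := by
  simp only [trace, diag_apply, mul_apply, conjTranspose_apply, Complex.re_sum]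
  rw [sum_comm]
  simp [← Complex.normSq_eq_norm_sq, Complex.normSq_apply]

variable [DecidableEq ι]

theorem Matrix.norm_apply_le_l2_opNorm (A : Matrix κ ι ℂ) (a : κ) (b : ι) : ‖A a b‖ ≤ ‖A‖ :=
  (PiLp.norm_apply_le (WithLp.toLp 2 (A.col b)) a).trans
    (by simpa using A.l2_opNorm_mulVec (EuclideanSpace.single b 1))

theorem Matrix.re_trace_le_card_mul_l2_opNorm (A : Matrix ι ι ℂ) :
    (trace A).re ≤ Fintype.card ι * ‖A‖ :=
  calc (trace A).re ≤ ∑ a, ‖A a a‖ := by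
        rw [trace, Complex.re_sum]
        exact sum_le_sum fun a _ ↦ Complex.re_le_norm _
    _ ≤ ∑ _a : ι, ‖A‖ := sum_le_sum fun a _ ↦ A.norm_apply_le_l2_opNorm a a
    _ = Fintype.card ι * ‖A‖ := by simp

theorem l2_opNorm_matrixPoly_le (C : (Fin d → Fin n) → Matrix κ ι ℂ) {z : Fin d → ℂ}
    (hz : ∀ i, ‖z i‖ = 1) : ‖matrixPoly C z‖ ≤ ∑ j, ‖C j‖ :=
  (norm_sum_le _ _).trans <| sum_le_sum fun j _ ↦ by simp [norm_smul, hz]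

theorem l2_opNorm_sum_conjTranspose_matrixPoly_mul_le {r : ℕ}
    (C : Fin r → (Fin d → Fin n) → Matrix κ ι ℂ) {z : Fin d → ℂ} (hz : ∀ i, ‖z i‖ = 1) :
    ‖∑ s, (matrixPoly (C s) z)ᴴ * matrixPoly (C s) z‖ ≤ ∑ s, (∑ j, ‖C s j‖) ^ 2 :=
  (norm_sum_le _ _).trans <| sum_le_sum fun s _ ↦ by
    rw [l2_opNorm_conjTranspose_mul_self, ← sq]
    gcongr
    exact l2_opNorm_matrixPoly_le (C s) hz

theorem sum_norm_sq_coeff_le_of_forall_l2_opNorm_le [NeZero n] {r : ℕ}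
    (C : Fin r → (Fin d → Fin n) → Matrix κ ι ℂ) {c : ℝ}
    (hc : ∀ z : Fin d → ℂ, (∀ i, ‖z i‖ = 1) →
      ‖∑ s, (matrixPoly (C s) z)ᴴ * matrixPoly (C s) z‖ ≤ c) :
    ∑ s, ∑ j, ∑ a, ∑ b, ‖C s j a b‖ ^ 2 ≤ Fintype.card ι * c := by
  have hζ := Complex.isPrimitiveRoot_exp n (NeZero.ne n)
  set ζ := Complex.exp (2 * Real.pi * Complex.I / n)
  let F (k : Fin d → Fin n) := ∑ s, (matrixPoly (C s) fun i ↦ ζ ^ (k i : ℕ))ᴴ *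
    matrixPoly (C s) fun i ↦ ζ ^ (k i : ℕ)
  have hF : ∀ k, (trace (F k)).re ≤ Fintype.card ι * c := fun k ↦
    (F k).re_trace_le_card_mul_l2_opNorm.trans <| by
      gcongr
      exact hc _ fun i ↦ by simp [hζ.norm'_eq_one (NeZero.ne n)]
  have hgrid : ∑ k, F k = ((n : ℂ) ^ d) • ∑ s, ∑ j, (C s j)ᴴ * C s j := by
    simp only [F]
    rw [sum_comm]
    simp only [hζ.sum_grid_conjTranspose_matrixPoly_mul, smul_sum]
  have hsum : (n : ℝ) ^ d * ∑ s, ∑ j, ∑ a, ∑ b, ‖C s j a b‖ ^ 2 = ∑ k, (trace (F k)).re := by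
    rw [← Complex.re_sum, ← trace_sum, hgrid, trace_smul, smul_eq_mul, ← Complex.ofReal_natCast,
      ← Complex.ofReal_pow, Complex.re_ofReal_mul]
    simp only [trace_sum, Complex.re_sum, re_trace_conjTranspose_mul_self]
  have hpos : (0 : ℝ) < (n : ℝ) ^ d := pow_pos (Nat.cast_pos.mpr (NeZero.pos n)) d
  refine le_of_mul_le_mul_left ?_ hpos
  calc (n : ℝ) ^ d * ∑ s, ∑ j, ∑ a, ∑ b, ‖C s j a b‖ ^ 2
      ≤ ∑ _k : Fin d → Fin n, Fintype.card ι * c := hsum ▸ sum_le_sum fun k _ ↦ hF k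
    _ = (n : ℝ) ^ d * (Fintype.card ι * c) := by simp

end MatrixPoly

theorem mass_weighted_coefficient_bound_general
    (m d q r : ℕ)
    (Qc : Fin r → (Fin d → Fin (q + 1)) → Matrix (Fin m) (Fin m) ℂ)
    (P : (Fin d → ℂ) → Matrix (Fin m) (Fin m) ℂ)
    (hfact : ∀ z : Fin d → ℂ, (∀ i, ‖z i‖ = 1) →
      P z = ∑ s : Fin r,
        (∑ j : Fin d → Fin (q + 1), (∏ i, z i ^ (j i : ℕ)) • Qc s j)ᴴ
          * (∑ j : Fin d → Fin (q + 1), (∏ i, z i ^ (j i : ℕ)) • Qc s j))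
    (Mdiag : Fin m → ℝ)
    (ωD2 : ℝ)
    (hω : ωD2 = ⨆ z : {z : Fin d → ℂ // ∀ i, ‖z i‖ = 1},
      ‖Matrix.toEuclideanCLM (𝕜 := ℂ)
        (((Matrix.diagonal fun a => (Real.sqrt (Mdiag a))⁻¹).map (fun x : ℝ => (x : ℂ)))
          * P z.1
          * ((Matrix.diagonal fun a => (Real.sqrt (Mdiag a))⁻¹).map (fun x : ℝ => (x : ℂ))))‖) :
    (∑ s : Fin r, ∑ j : Fin d → Fin (q + 1), ∑ a : Fin m, ∑ b : Fin m,
        ‖(Qc s j *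
          ((Matrix.diagonal fun a => (Real.sqrt (Mdiag a))⁻¹).map (fun x : ℝ => (x : ℂ)))) a b‖ ^ 2)
      ≤ (m : ℝ) * ωD2 := by
  set D : Matrix (Fin m) (Fin m) ℂ := (diagonal fun a ↦ (√(Mdiag a))⁻¹).map (↑)
  have hD : Dᴴ = D := by simp [D, diagonal_map, diagonal_conjTranspose]
  let C s j := Qc s j * D
  have hPD : ∀ z : Fin d → ℂ, (∀ i, ‖z i‖ = 1) →
      D * P z * D = ∑ s, (matrixPoly (C s) z)ᴴ * matrixPoly (C s) z := by
    intro z hz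
    rw [hfact z hz]
    change D * (∑ s, (matrixPoly (Qc s) z)ᴴ * matrixPoly (Qc s) z) * D = _
    simp only [C, matrixPoly_mul, Matrix.mul_sum, Matrix.sum_mul, conjTranspose_mul, hD,
      Matrix.mul_assoc]
  -- Without this, `⨆` would be the junk value `0`.
  have hbdd : BddAbove (Set.range fun z : {z : Fin d → ℂ // ∀ i, ‖z i‖ = 1} ↦ ‖D * P z.1 * D‖) :=
    ⟨∑ s, (∑ j, ‖C s j‖) ^ 2, by
      rintro _ ⟨z, rfl⟩
      change ‖D * P z.1 * D‖ ≤ _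
      rw [hPD z z.2]
      exact l2_opNorm_sum_conjTranspose_matrixPoly_mul_le C z.2⟩
  simpa using sum_norm_sq_coeff_le_of_forall_l2_opNorm_le C fun z hz ↦
    hω ▸ hPD z hz ▸ le_ciSup hbdd ⟨z, hz⟩

/-- bound on the mass-weighted Fejér–Riesz coefficients: if
`P(z) = ∑_s Q^{(s)}(z)ᴴ Q^{(s)}(z)` on the `d`-torus with
`Q^{(s)}(z) = ∑_{j∈{0,…,q}^d} Q^{(s)}_j z^j`, `M` a positive diagonal mass matrix, and
`ω_D² = sup_{z∈𝕋^d} ‖M^{-1/2} P(z) M^{-1/2}‖` (operator norm), then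
`∑_s ∑_j ‖Q^{(s)}_j M^{-1/2}‖_F² ≤ m · ω_D²`. -/
theorem mass_weighted_coefficient_bound
    (m d q r : ℕ) (hm : 0 < m) (hd : 0 < d) (hq : 0 < q) (hr : 0 < r)
    (Qc : Fin r → (Fin d → Fin (q + 1)) → Matrix (Fin m) (Fin m) ℂ)
    (P : (Fin d → ℂ) → Matrix (Fin m) (Fin m) ℂ)
    (hfact : ∀ z : Fin d → ℂ, (∀ i, ‖z i‖ = 1) →
      P z = ∑ s : Fin r,
        (∑ j : Fin d → Fin (q + 1), (∏ i, z i ^ (j i : ℕ)) • Qc s j)ᴴ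
          * (∑ j : Fin d → Fin (q + 1), (∏ i, z i ^ (j i : ℕ)) • Qc s j))
    (Mdiag : Fin m → ℝ) (hM : ∀ a, 0 < Mdiag a)
    (ωD2 : ℝ)
    (hω : ωD2 = ⨆ z : {z : Fin d → ℂ // ∀ i, ‖z i‖ = 1},
      ‖Matrix.toEuclideanCLM (𝕜 := ℂ)
        (((Matrix.diagonal fun a => (Real.sqrt (Mdiag a))⁻¹).map (fun x : ℝ => (x : ℂ)))
          * P z.1
          * ((Matrix.diagonal fun a => (Real.sqrt (Mdiag a))⁻¹).map (fun x : ℝ => (x : ℂ))))‖) :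
    (∑ s : Fin r, ∑ j : Fin d → Fin (q + 1), ∑ a : Fin m, ∑ b : Fin m,
        ‖(Qc s j *
          ((Matrix.diagonal fun a => (Real.sqrt (Mdiag a))⁻¹).map (fun x : ℝ => (x : ℂ)))) a b‖ ^ 2)
      ≤ (m : ℝ) * ωD2 :=
  mass_weighted_coefficient_bound_general m d q r Qc P hfact Mdiag ωD2 hω
end
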